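/- arXiv:1009.0994 — 3 statements merged into one kernel-verified Lean document; each statement's English description precedes it below -/
import Mathlib

section
/- Let A ≥ 0, let c, k ≥ 1 be integers, and let K > c²k² + A. Suppose (m,n), (m',n') ∈ ℤ² satisfy |m² + n² − R| ≤ A and |m'² + n'² − R| ≤ A for some real R, (m,n) ≠ (m',n'), and |mα + nβ| > K for every nonzero (α,β) ∈ ℤ² with |α| ≤ ck and |β| ≤ ck. Then max(|m − m'|, |n − n'|) > ck. -/
/-- Separation of resonant lattice sites: if `(m,n)` and `(m',n')` are distinct
lattice points in the annulus `|x² + y² - R| ≤ A` and `(m,n)` avoids all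
resonances `|mα + nβ| ≤ K` with `0 < |(α,β)|_∞ ≤ ck`, where
`K > c²k² + A`, then `max(|m - m'|, |n - n'|) > ck`. -/
theorem stmt_5 (A : ℝ) (hA : 0 ≤ A) (c k : ℤ) (hc : 1 ≤ c) (hk : 1 ≤ k)
    (K : ℝ) (hK : ((c : ℝ) ^ 2 * (k : ℝ) ^ 2 + A) < K)
    (m n m' n' : ℤ) (R : ℝ)
    (h1 : |((m ^ 2 + n ^ 2 : ℤ) : ℝ) - R| ≤ A)
    (h2 : |((m' ^ 2 + n' ^ 2 : ℤ) : ℝ) - R| ≤ A)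
    (hne : (m, n) ≠ (m', n'))
    (hsep : ∀ α β : ℤ, (α, β) ≠ (0, 0) → |α| ≤ c * k → |β| ≤ c * k →
      K < |((m * α + n * β : ℤ) : ℝ)|) :
    c * k < max |m - m'| |n - n'| := by
  by_contra h
  push_neg at h
  have hα : |m' - m| ≤ c * k := by
    rw [abs_sub_comm]; exact le_of_max_le_left h
  have hβ : |n' - n| ≤ c * k := by
    rw [abs_sub_comm]; exact le_of_max_le_right h
  have hne' : (m' - m, n' - n) ≠ (0, 0) := by
    intro hcon
    have e1 := congrArg Prod.fst hcon
    have e2 := congrArg Prod.snd hcon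
    simp at e1 e2
    exact hne (by simp [Prod.ext_iff]; omega)
  have hbig := hsep (m' - m) (n' - n) hne' hα hβ
  -- algebraic identity
  have key : ((2 * (m * (m' - m) + n * (n' - n)) : ℤ) : ℝ)
      = (((m' ^ 2 + n' ^ 2 : ℤ) : ℝ) - R) - (((m ^ 2 + n ^ 2 : ℤ) : ℝ) - R)
        - (((m' - m) ^ 2 + (n' - n) ^ 2 : ℤ) : ℝ) := by
    push_cast; ring
  have hck : (1 : ℝ) ≤ (c : ℝ) * k := by
    have : (1 : ℤ) ≤ c * k := one_le_mul_of_one_le_of_one_le hc hk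
    exact_mod_cast this
  have hsq : (((m' - m) ^ 2 + (n' - n) ^ 2 : ℤ) : ℝ) ≤ 2 * ((c : ℝ) ^ 2 * (k : ℝ) ^ 2) := by
    have h1 : ((m' - m) ^ 2 : ℤ) ≤ (c * k) ^ 2 := by
      have := sq_abs (m' - m)
      nlinarith [abs_nonneg (m' - m), sq_abs (m' - m)]
    have h2 : ((n' - n) ^ 2 : ℤ) ≤ (c * k) ^ 2 := by
      nlinarith [abs_nonneg (n' - n), sq_abs (n' - n)]
    have : ((m' - m) ^ 2 + (n' - n) ^ 2 : ℤ) ≤ 2 * (c * k) ^ 2 := by omega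
    have h3 : (((m' - m) ^ 2 + (n' - n) ^ 2 : ℤ) : ℝ) ≤ ((2 * (c * k) ^ 2 : ℤ) : ℝ) := by
      exact_mod_cast this
    push_cast at h3 ⊢
    nlinarith
  have habs : |((m * (m' - m) + n * (n' - n) : ℤ) : ℝ)| ≤ (c : ℝ) ^ 2 * (k : ℝ) ^ 2 + A := by
    have h2' : |((2 * (m * (m' - m) + n * (n' - n)) : ℤ) : ℝ)| ≤ 2 * A + 2 * ((c : ℝ) ^ 2 * (k : ℝ) ^ 2) := by
      rw [key]
      have hnn : (0 : ℝ) ≤ (((m' - m) ^ 2 + (n' - n) ^ 2 : ℤ) : ℝ) := by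
        have : (0 : ℤ) ≤ (m' - m) ^ 2 + (n' - n) ^ 2 := by positivity
        exact_mod_cast this
      calc _ ≤ |((m' ^ 2 + n' ^ 2 : ℤ) : ℝ) - R| + |((m ^ 2 + n ^ 2 : ℤ) : ℝ) - R|
              + |(((m' - m) ^ 2 + (n' - n) ^ 2 : ℤ) : ℝ)| := by
              apply (abs_sub _ _).trans
              gcongr
              exact abs_sub _ _
        _ ≤ _ := by rw [abs_of_nonneg hnn]; linarith
    have : |((2 * (m * (m' - m) + n * (n' - n)) : ℤ) : ℝ)|
        = 2 * |((m * (m' - m) + n * (n' - n) : ℤ) : ℝ)| := by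
      push_cast; rw [abs_mul]; norm_num
    linarith [this ▸ h2']
  linarith [hbig.trans_le habs]
end

section
/- Let P be a real polynomial of degree n ≥ 1 and ε > 0. Then the sublevel set {x ∈ ℝ : |P(x)| < ε} is a disjoint union of at most n + 1 open intervals (i.e., it has at most n + 1 connected components). -/
open Polynomial Set Filter

/-- A sublevel set `{|P| < ε}` of a real polynomial of degree `n ≥ 1` is a
disjoint union of at most `n + 1` open intervals. -/
theorem stmt_18 (P : Polynomial ℝ) (hdeg : 1 ≤ P.natDegree) (ε : ℝ) (hε : 0 < ε) :
    ∃ N : ℕ, N ≤ P.natDegree + 1 ∧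
      ∃ a b : Fin N → ℝ,
        (∀ i j, i ≠ j → Set.Ioo (a i) (b i) ∩ Set.Ioo (a j) (b j) = ∅) ∧
        {x : ℝ | |P.eval x| < ε} = ⋃ i, Set.Ioo (a i) (b i) := by
  classical
  set n := P.natDegree with hn
  have hP0 : P ≠ 0 := by
    intro h
    rw [hn, h, natDegree_zero] at hdeg; omega
  set Q : Polynomial ℝ := P ^ 2 - C (ε ^ 2) with hQdef
  have hevalQ : ∀ x : ℝ, Q.eval x = (P.eval x) ^ 2 - ε ^ 2 := by
    intro x; simp [hQdef]
  have hset : {x : ℝ | |P.eval x| < ε} = {x : ℝ | Q.eval x < 0} := by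
    ext x
    simp only [Set.mem_setOf_eq, hevalQ]
    rw [sub_neg, sq_lt_sq, abs_of_pos hε]
  have hQnd : Q.natDegree = 2 * n := by
    rw [hQdef, natDegree_sub_C, natDegree_pow]
  have hQ0 : Q ≠ 0 := by
    intro h; rw [h] at hQnd; simp at hQnd; omega
  have hQlc : 0 < Q.leadingCoeff := by
    have h1 : (P ^ 2).natDegree = 2 * n := by rw [natDegree_pow]
    have h2 : Q.coeff (2 * n) = (P ^ 2).coeff (2 * n) := by
      rw [hQdef, coeff_sub, coeff_C, if_neg (by omega : ¬ 2 * n = 0), sub_zero]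
    have h3 : Q.leadingCoeff = P.leadingCoeff ^ 2 := by
      rw [leadingCoeff, hQnd, h2, ← h1, coeff_natDegree, leadingCoeff_pow]
    rw [h3]
    exact pow_two_pos_of_ne_zero (leadingCoeff_ne_zero.mpr hP0)
  have hQdpos : 0 < Q.degree := natDegree_pos_iff_degree_pos.mp (by omega : 0 < Q.natDegree)
  -- values of Q are eventually positive at +infinity
  have hTop : ∀ x : ℝ, ∃ y, x < y ∧ 0 < Q.eval y := by
    intro x
    have h1 : Tendsto (fun t => Q.eval t) atTop atTop :=
      Polynomial.tendsto_atTop_of_leadingCoeff_nonneg Q hQdpos hQlc.le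
    have h2 : ∀ᶠ y in atTop, 0 < Q.eval y := h1.eventually_gt_atTop 0
    obtain ⟨y, hy1, hy2⟩ := (h2.and (eventually_gt_atTop x)).exists
    exact ⟨y, hy2, hy1⟩
  -- values of Q are eventually positive at -infinity
  have hBot : ∀ x : ℝ, ∃ y, y < x ∧ 0 < Q.eval y := by
    intro x
    set Q2 : Polynomial ℝ := Q.comp (-X) with hQ2def
    have hev : ∀ t : ℝ, Q2.eval t = Q.eval (-t) := by
      intro t; rw [hQ2def, eval_comp]; simp
    have hnd2 : Q2.natDegree = 2 * n := by
      rw [hQ2def, natDegree_comp, natDegree_neg, natDegree_X, mul_one, hQnd]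
    have hq2degpos : 0 < Q2.degree :=
      natDegree_pos_iff_degree_pos.mp (by omega : 0 < Q2.natDegree)
    have hlc2 : Q2.leadingCoeff = Q.leadingCoeff := by
      rw [hQ2def, leadingCoeff_comp (by simp : (-X : Polynomial ℝ).natDegree ≠ 0)]
      rw [leadingCoeff_neg, leadingCoeff_X, hQnd]
      rw [show ((-1 : ℝ) ^ (2 * n)) = 1 by rw [pow_mul]; norm_num, mul_one]
    have h1 : Tendsto (fun t => Q2.eval t) atTop atTop :=
      Polynomial.tendsto_atTop_of_leadingCoeff_nonneg Q2 hq2degpos (hlc2 ▸ hQlc.le)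
    have h2 : ∀ᶠ y in atTop, 0 < Q2.eval y := h1.eventually_gt_atTop 0
    obtain ⟨y, hy1, hy2⟩ := (h2.and (eventually_gt_atTop (-x))).exists
    refine ⟨-y, by linarith, ?_⟩
    rw [← hev]; exact hy1
  -- IVT helpers
  have hrootUp : ∀ u v : ℝ, u ≤ v → Q.eval u ≤ 0 → 0 ≤ Q.eval v →
      ∃ z, z ∈ Set.Icc u v ∧ Q.eval z = 0 := by
    intro u v huv h1 h2
    have := intermediate_value_Icc huv (Q.continuous.continuousOn (s := Set.Icc u v))
    obtain ⟨z, hz1, hz2⟩ := this ⟨h1, h2⟩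
    exact ⟨z, hz1, hz2⟩
  have hrootDown : ∀ u v : ℝ, u ≤ v → 0 ≤ Q.eval u → Q.eval v ≤ 0 →
      ∃ z, z ∈ Set.Icc u v ∧ Q.eval z = 0 := by
    intro u v huv h1 h2
    have := intermediate_value_Icc' huv (Q.continuous.continuousOn (s := Set.Icc u v))
    obtain ⟨z, hz1, hz2⟩ := this ⟨h2, h1⟩
    exact ⟨z, hz1, hz2⟩
  rw [hset]
  -- trivial case: empty sublevel set
  by_cases hS : {x : ℝ | Q.eval x < 0} = ∅
  · refine ⟨0, by omega, fun i => i.elim0, fun i => i.elim0, fun i => i.elim0, ?_⟩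
    rw [hS, Set.iUnion_of_empty]
  -- main case
  obtain ⟨x0, hx0⟩ : ∃ x : ℝ, Q.eval x < 0 := by
    rcases Set.eq_empty_or_nonempty {x : ℝ | Q.eval x < 0} with h | h
    · exact absurd h hS
    · exact h
  set F : Finset ℝ := Q.roots.toFinset with hFdef
  have hmemF : ∀ z : ℝ, z ∈ F ↔ Q.eval z = 0 := by
    intro z
    rw [hFdef, Multiset.mem_toFinset, mem_roots hQ0]
    rfl
  have hFcard : F.card ≤ 2 * n := by
    calc F.card ≤ Multiset.card Q.roots := Multiset.toFinset_card_le _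
    _ ≤ Q.natDegree := Q.card_roots'
    _ = 2 * n := hQnd
  set k : ℕ := F.card with hkdef
  have hk : 0 < k := by
    obtain ⟨y, hy1, hy2⟩ := hTop x0
    obtain ⟨z, _, hz2⟩ := hrootUp x0 y hy1.le hx0.le hy2.le
    have : z ∈ F := (hmemF z).mpr hz2
    exact Finset.card_pos.mpr ⟨z, this⟩
  set e : Fin k ≃o {x // x ∈ F} := F.orderIsoOfFin rfl with hedef
  set r : ℕ → ℝ := fun m => if h : m < k then (e ⟨m, h⟩ : ℝ) else 0 with hrdef
  have hrF : ∀ m, m < k → r m ∈ F := by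
    intro m hm
    rw [hrdef]; simp only [dif_pos hm]
    exact (e ⟨m, hm⟩).2
  have hrlt : ∀ m l, m < k → l < k → (r m < r l ↔ m < l) := by
    intro m l hm hl
    rw [hrdef]; simp only [dif_pos hm, dif_pos hl]
    rw [show ((e ⟨m, hm⟩ : ℝ) < (e ⟨l, hl⟩ : ℝ)) ↔ e ⟨m, hm⟩ < e ⟨l, hl⟩ from Iff.rfl]
    rw [e.lt_iff_lt, Fin.mk_lt_mk]
  have hsurjF : ∀ z, z ∈ F → ∃ m, m < k ∧ r m = z := by
    intro z hz
    obtain ⟨m, hm⟩ := e.surjective ⟨z, hz⟩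
    refine ⟨m.1, m.2, ?_⟩
    rw [hrdef]; simp only [dif_pos m.2]
    rw [show (⟨m.1, m.2⟩ : Fin k) = m from rfl, hm]
  -- no root strictly between consecutive sorted roots
  have hNoRoot : ∀ i, i + 1 < k → ∀ z, z ∈ Set.Ioo (r i) (r (i + 1)) → Q.eval z ≠ 0 := by
    intro i hi z hz hz0
    obtain ⟨m, hm, hmz⟩ := hsurjF z ((hmemF z).mpr hz0)
    have h1 : i < m := (hrlt i m (by omega) hm).mp (hmz ▸ hz.1)
    have h2 : m < i + 1 := (hrlt m (i + 1) hm hi).mp (hmz ▸ hz.2)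
    omega
  -- constant sign on intervals between consecutive roots
  have hconst : ∀ i, i + 1 < k → ∀ x ∈ Set.Ioo (r i) (r (i + 1)),
      ∀ y ∈ Set.Ioo (r i) (r (i + 1)), Q.eval x < 0 → Q.eval y < 0 := by
    intro i hi x hx y hy hxneg
    by_contra hyn
    push_neg at hyn
    rcases le_total x y with hxy | hxy
    · obtain ⟨z, hz1, hz2⟩ := hrootUp x y hxy hxneg.le hyn
      exact hNoRoot i hi z ⟨lt_of_lt_of_le hx.1 hz1.1, lt_of_le_of_lt hz1.2 hy.2⟩ hz2
    · obtain ⟨z, hz1, hz2⟩ := hrootDown y x hxy hyn hxneg.le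
      exact hNoRoot i hi z ⟨lt_of_lt_of_le hy.1 hz1.1, lt_of_le_of_lt hz1.2 hx.2⟩ hz2
  set B : Finset ℕ :=
    (Finset.range (k - 1)).filter (fun i => Q.eval ((r i + r (i + 1)) / 2) < 0) with hBdef
  have hBmem : ∀ i, i ∈ B ↔ i + 1 < k ∧ Q.eval ((r i + r (i + 1)) / 2) < 0 := by
    intro i
    rw [hBdef, Finset.mem_filter, Finset.mem_range]
    constructor
    · rintro ⟨h1, h2⟩; exact ⟨by omega, h2⟩
    · rintro ⟨h1, h2⟩; exact ⟨by omega, h2⟩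
  -- Q is negative on the whole interval for i ∈ B
  have hBneg : ∀ i, i ∈ B → ∀ y ∈ Set.Ioo (r i) (r (i + 1)), Q.eval y < 0 := by
    intro i hi y hy
    obtain ⟨hi1, hi2⟩ := (hBmem i).mp hi
    have hlt : r i < r (i + 1) := (hrlt i (i + 1) (by omega) hi1).mpr (by omega)
    have hmid : (r i + r (i + 1)) / 2 ∈ Set.Ioo (r i) (r (i + 1)) :=
      ⟨by linarith, by linarith⟩
    exact hconst i hi1 _ hmid y hy hi2
  -- every point with negative value belongs to one of the intervals
  have hloc : ∀ x : ℝ, Q.eval x < 0 → ∃ i, i ∈ B ∧ x ∈ Set.Ioo (r i) (r (i + 1)) := by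
    intro x hx
    have hxne : x ∉ F := fun h => absurd ((hmemF x).mp h) (by linarith)
    -- x is strictly above the smallest root
    have hlow : r 0 < x := by
      by_contra h
      push_neg at h
      have h' : x < r 0 := lt_of_le_of_ne h (fun hc => hxne (hc ▸ hrF 0 hk))
      obtain ⟨y, hy1, hy2⟩ := hBot x
      obtain ⟨z, hz1, hz2⟩ := hrootDown y x hy1.le hy2.le hx.le
      obtain ⟨m, hm, hmz⟩ := hsurjF z ((hmemF z).mpr hz2)
      have : r 0 ≤ r m := by
        rcases Nat.eq_zero_or_pos m with h0 | h0
        · rw [h0]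
        · exact ((hrlt 0 m hk hm).mpr h0).le
      have : r 0 ≤ x := le_trans this (hmz ▸ hz1.2)
      linarith
    have hhigh : x < r (k - 1) := by
      by_contra h
      push_neg at h
      have h' : r (k - 1) < x := lt_of_le_of_ne h (fun hc => hxne (hc ▸ hrF (k - 1) (by omega)))
      obtain ⟨y, hy1, hy2⟩ := hTop x
      obtain ⟨z, hz1, hz2⟩ := hrootUp x y hy1.le hx.le hy2.le
      obtain ⟨m, hm, hmz⟩ := hsurjF z ((hmemF z).mpr hz2)
      have : r m ≤ r (k - 1) := by
        rcases Nat.lt_or_ge m (k - 1) with h0 | h0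
        · exact ((hrlt m (k - 1) hm (by omega)).mpr h0).le
        · have : m = k - 1 := by omega
          rw [this]
      have : x ≤ r (k - 1) := le_trans (hmz ▸ hz1.1) this
      linarith
    -- take the largest root below x
    set A : Finset ℕ := (Finset.range k).filter (fun m => r m < x) with hAdef
    have hAne : A.Nonempty := ⟨0, by rw [hAdef]; simp [Finset.mem_filter, hk, hlow]⟩
    set i : ℕ := A.max' hAne with hidef
    have hiA : i ∈ A := A.max'_mem hAne
    have hik : i < k := by
      have := hiA; rw [hAdef, Finset.mem_filter, Finset.mem_range] at this; exact this.1
    have hirx : r i < x := by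
      have := hiA; rw [hAdef, Finset.mem_filter] at this; exact this.2
    have hik1 : i + 1 < k := by
      rcases Nat.lt_or_ge (i + 1) k with h0 | h0
      · exact h0
      · exfalso
        have : i = k - 1 := by omega
        rw [this] at hirx; linarith
    have hxr : x < r (i + 1) := by
      by_contra h
      push_neg at h
      have h' : r (i + 1) < x := lt_of_le_of_ne h (fun hc => hxne (hc.symm ▸ hrF (i + 1) hik1))
      have : i + 1 ∈ A := by rw [hAdef, Finset.mem_filter, Finset.mem_range]; exact ⟨hik1, h'⟩
      have := A.le_max' _ this
      omega
    have hiB : i ∈ B := by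
      rw [hBmem]
      refine ⟨hik1, ?_⟩
      have hlt : r i < r (i + 1) := lt_trans hirx hxr
      exact hconst i hik1 x ⟨hirx, hxr⟩ _ ⟨by linarith, by linarith⟩ hx
    exact ⟨i, hiB, hirx, hxr⟩
  -- the set equality
  have hSet2 : {x : ℝ | Q.eval x < 0} = ⋃ i ∈ B, Set.Ioo (r i) (r (i + 1)) := by
    ext x
    simp only [Set.mem_setOf_eq, Set.mem_iUnion]
    constructor
    · intro hx
      obtain ⟨i, hi1, hi2⟩ := hloc x hx
      exact ⟨i, hi1, hi2⟩
    · rintro ⟨i, hi1, hi2⟩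
      exact hBneg i hi1 x hi2
  have hrle : ∀ m l, m ≤ l → l < k → r m ≤ r l := by
    intro m l hml hl
    rcases eq_or_lt_of_le hml with h | h
    · rw [h]
    · exact ((hrlt m l (by omega) hl).mpr h).le
  -- the crucial cardinality bound on B
  have hcardB : B.card ≤ n := by
    rcases Finset.eq_empty_or_nonempty B with hBe | hBne
    · rw [hBe]; simp
    set i0 := B.min' hBne with hi0def
    have hi0B : i0 ∈ B := B.min'_mem hBne
    set R' : Finset ℝ := (derivative P).roots.toFinset with hR'def
    have hP'0 : derivative P ≠ 0 := by
      intro hc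
      have := Polynomial.natDegree_eq_zero_of_derivative_eq_zero hc
      omega
    have hmemR' : ∀ z : ℝ, (derivative P).eval z = 0 → z ∈ R' := by
      intro z hz
      rw [hR'def, Multiset.mem_toFinset, mem_roots hP'0]
      exact hz
    have hR'card : R'.card ≤ n - 1 := by
      have h1 : R'.card ≤ (derivative P).natDegree :=
        le_trans (Multiset.toFinset_card_le _) (derivative P).card_roots'
      have h2 : (derivative P).natDegree < n := natDegree_derivative_lt (by omega)
      omega
    have hderivQ : ∀ t : ℝ, deriv (fun x => Q.eval x) t =
        2 * P.eval t * (derivative P).eval t := by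
      intro t
      rw [Polynomial.deriv, hQdef]
      simp [derivative_pow]
      try ring
    have hPne : ∀ t, 0 ≤ Q.eval t → P.eval t ≠ 0 := by
      intro t ht hc
      rw [hevalQ, hc] at ht
      nlinarith
    have hcrit : ∀ i ∈ B.erase i0, ∃ t : ℝ, (derivative P).eval t = 0 ∧
        ∃ j, j ∈ B ∧ j < i ∧ (∀ m ∈ B, m < i → m ≤ j) ∧ r (j + 1) ≤ t ∧ t ≤ r i := by
      intro i hi
      have hiB : i ∈ B := Finset.mem_of_mem_erase hi
      have hii0 : i ≠ i0 := Finset.ne_of_mem_erase hi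
      have hi0lt : i0 < i := lt_of_le_of_ne (B.min'_le i hiB) (Ne.symm hii0)
      set Bi := B.filter (fun m => m < i) with hBidef
      have hBine : Bi.Nonempty := ⟨i0, by rw [hBidef]; simp [hi0B, hi0lt]⟩
      set j := Bi.max' hBine with hjdef
      have hjBi : j ∈ Bi := Bi.max'_mem _
      have hjB : j ∈ B := (Finset.mem_filter.mp hjBi).1
      have hji : j < i := by
        have := (Finset.mem_filter.mp hjBi).2; simpa using this
      have hjmax : ∀ m ∈ B, m < i → m ≤ j := fun m hm hmi =>
        Bi.le_max' m (Finset.mem_filter.mpr ⟨hm, by simpa using hmi⟩)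
      have hik1 : i + 1 < k := ((hBmem i).mp hiB).1
      have hjk1 : j + 1 < k := ((hBmem j).mp hjB).1
      have huv : r (j + 1) ≤ r i := hrle (j + 1) i (by omega) (by omega)
      have hQge : ∀ t, r (j + 1) ≤ t → t ≤ r i → 0 ≤ Q.eval t := by
        intro t h1 h2
        by_contra hc
        push_neg at hc
        obtain ⟨m, hm1, hm2⟩ := hloc t hc
        have hmk1 : m + 1 < k := ((hBmem m).mp hm1).1
        have hmi : m < i := by
          have : r m < r i := lt_of_lt_of_le hm2.1 h2
          exact (hrlt m i (by omega) (by omega)).mp this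
        have hjm : j < m := by
          have h3 : r (j + 1) < r (m + 1) := lt_of_le_of_lt h1 hm2.2
          have := (hrlt (j + 1) (m + 1) hjk1 hmk1).mp h3
          omega
        have := hjmax m hm1 hmi
        omega
      have hQu : Q.eval (r (j + 1)) = 0 := (hmemF _).mp (hrF _ hjk1)
      have hQv : Q.eval (r i) = 0 := (hmemF _).mp (hrF _ (by omega))
      rcases eq_or_lt_of_le huv with heq | hlt
      · -- degenerate gap: the common endpoint is a local max of Q
        refine ⟨r i, ?_, j, hjB, hji, hjmax, heq.le, le_refl _⟩
        have hrj : r j < r i := by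
          rw [← heq]; exact (hrlt j (j + 1) (by omega) hjk1).mpr (by omega)
        have hri1 : r i < r (i + 1) := (hrlt i (i + 1) (by omega) hik1).mpr (by omega)
        have hmax : IsLocalMax (fun x => Q.eval x) (r i) := by
          have hmem : Set.Ioo (r j) (r (i + 1)) ∈ nhds (r i) := Ioo_mem_nhds hrj hri1
          refine Filter.eventually_of_mem hmem ?_
          intro y hy
          rcases lt_trichotomy y (r i) with h | h | h
          · have : Q.eval y < 0 := hBneg j hjB y ⟨hy.1, heq ▸ h⟩
            simpa [hQv] using this.le
          · simp [h, hQv]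
          · have : Q.eval y < 0 := hBneg i hiB y ⟨h, hy.2⟩
            simpa [hQv] using this.le
        have hz : deriv (fun x => Q.eval x) (r i) = 0 := hmax.deriv_eq_zero
        rw [hderivQ] at hz
        have hPc : P.eval (r i) ≠ 0 := hPne _ (le_of_eq hQv.symm)
        rcases mul_eq_zero.mp hz with h | h
        · rcases mul_eq_zero.mp h with h' | h'
          · norm_num at h'
          · exact absurd h' hPc
        · exact h
      · -- nondegenerate gap: Rolle
        obtain ⟨c, hc1, hc2⟩ := exists_deriv_eq_zero hlt Q.continuous.continuousOn
          (by rw [hQu, hQv])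
        refine ⟨c, ?_, j, hjB, hji, hjmax, hc1.1.le, hc1.2.le⟩
        rw [hderivQ] at hc2
        have hPc : P.eval c ≠ 0 := hPne c (hQge c hc1.1.le hc1.2.le)
        rcases mul_eq_zero.mp hc2 with h | h
        · rcases mul_eq_zero.mp h with h' | h'
          · norm_num at h'
          · exact absurd h' hPc
        · exact h
    choose! g hg0 j' hj'B hj'lt hj'max hglb hgub using hcrit
    have hmaps : ∀ i ∈ B.erase i0, g i ∈ R' := fun i hi => hmemR' _ (hg0 i hi)
    have hmono : ∀ i1 ∈ B.erase i0, ∀ i2 ∈ B.erase i0, i1 < i2 → g i1 < g i2 := by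
      intro i1 hi1 i2 hi2 h12
      have hi1B : i1 ∈ B := Finset.mem_of_mem_erase hi1
      have hi1k : i1 + 1 < k := ((hBmem i1).mp hi1B).1
      have hj2 : i1 ≤ j' i2 := hj'max i2 hi2 i1 hi1B h12
      have hj2k : (j' i2) + 1 < k := ((hBmem _).mp (hj'B i2 hi2)).1
      have h1 : g i1 ≤ r i1 := hgub i1 hi1
      have h2 : r i1 < r (i1 + 1) := (hrlt i1 (i1 + 1) (by omega) hi1k).mpr (by omega)
      have h3 : r (i1 + 1) ≤ r ((j' i2) + 1) := hrle _ _ (by omega) hj2k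
      have h4 : r ((j' i2) + 1) ≤ g i2 := hglb i2 hi2
      linarith
    have hinj : Set.InjOn g ↑(B.erase i0) := by
      intro a ha b hb hab
      by_contra hne
      rcases Nat.lt_or_ge a b with h | h
      · exact absurd hab (ne_of_lt (hmono a ha b hb h))
      · have : b < a := by omega
        exact absurd hab.symm (ne_of_lt (hmono b hb a ha this))
    have hcard1 : (B.erase i0).card ≤ R'.card :=
      Finset.card_le_card_of_injOn g hmaps hinj
    have hcard2 : (B.erase i0).card + 1 = B.card := Finset.card_erase_add_one hi0B
    omega
  -- disjointness of the intervals
  have hdisj : ∀ p q, p ∈ B → q ∈ B → p ≠ q →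
      Set.Ioo (r p) (r (p + 1)) ∩ Set.Ioo (r q) (r (q + 1)) = ∅ := by
    intro p q hp hq hpq
    rw [Set.eq_empty_iff_forall_notMem]
    rintro x ⟨⟨h1, h2⟩, ⟨h3, h4⟩⟩
    have hpk : p + 1 < k := ((hBmem p).mp hp).1
    have hqk : q + 1 < k := ((hBmem q).mp hq).1
    rcases Nat.lt_or_ge p q with h | h
    · have : r (p + 1) ≤ r q := hrle _ _ (by omega) (by omega)
      linarith
    · have hqp : q < p := by omega
      have : r (q + 1) ≤ r p := hrle _ _ (by omega) (by omega)
      linarith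
  -- final assembly
  set N := B.card with hNdef
  set eB : Fin N ≃o {x // x ∈ B} := B.orderIsoOfFin rfl with heBdef
  refine ⟨N, le_trans hcardB (Nat.le_succ n), fun i => r ((eB i : {x // x ∈ B}) : ℕ),
    fun i => r (((eB i : {x // x ∈ B}) : ℕ) + 1), ?_, ?_⟩
  · intro i j hij
    apply hdisj
    · exact (eB i).2
    · exact (eB j).2
    · intro hc
      exact hij (eB.injective (Subtype.ext hc))
  · rw [hSet2]
    ext x
    simp only [Set.mem_iUnion]
    constructor
    · rintro ⟨p, hp, hx⟩
      obtain ⟨i, hi⟩ := eB.surjective ⟨p, hp⟩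
      refine ⟨i, ?_⟩
      have hcoe : ((eB i : {x // x ∈ B}) : ℕ) = p := by rw [hi]
      rw [hcoe]
      exact hx
    · rintro ⟨i, hx⟩
      exact ⟨((eB i : {x // x ∈ B}) : ℕ), (eB i).2, hx⟩
end

section
/- Let P be a real polynomial whose resultant with its derivative is nonzero (equivalently, P has no repeated complex roots). Then there is a constant δ > 0 such that |P'(x)| ≥ δ for every real x with P(x) = 0; moreover for every real root x₀ of P there exist c > 0 and ε₀ > 0 such that for all 0 < ε < ε₀, the set {x ∈ ℝ : |x − x₀| < c and |P(x)| ≤ ε} has Lebesgue measure at most (4/δ)·ε. -/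
open MeasureTheory Filter Topology Set

/-! Every real root of `P` is a simple complex root, so `P'` does not vanish there; as there are
finitely many roots, `|P'|` is bounded below on them by some `δ > 0`. By continuity `|P'| ≥ δ/2`
on a ball around a root, and there the mean value theorem makes `P` expanding: two points where
`|P| ≤ ε` are at most `2ε/(δ/2) = 4ε/δ` apart, which bounds the diameter, hence the measure, of
the sublevel set. -/

theorem Set.Finite.exists_pos_forall_le {ι : Type*} {s : Set ι} (hs : s.Finite) {g : ι → ℝ}
    (hg : ∀ i ∈ s, 0 < g i) : ∃ δ : ℝ, 0 < δ ∧ ∀ i ∈ s, δ ≤ g i := by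
  have hsmall : ∀ᶠ δ in 𝓝[>] (0 : ℝ), ∀ i ∈ s, δ ≤ g i :=
    hs.eventually_all.2 fun i hi =>
      ((eventually_lt_nhds (hg i hi)).filter_mono nhdsWithin_le_nhds).mono fun _ h => h.le
  exact (hsmall.and self_mem_nhdsWithin).exists.imp fun δ h => ⟨h.2, h.1⟩

theorem mul_abs_sub_le_abs_sub_of_le_abs_deriv {f f' : ℝ → ℝ} {s : Set ℝ} (hs : Convex ℝ s)
    (hf : ∀ x ∈ s, HasDerivAt f (f' x) x) {m : ℝ} (hm : ∀ x ∈ s, m ≤ |f' x|) {x y : ℝ}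
    (hx : x ∈ s) (hy : y ∈ s) : m * |y - x| ≤ |f y - f x| := by
  wlog hxy : x < y generalizing x y
  · rcases (not_lt.1 hxy).eq_or_lt with rfl | hyx
    · simp
    · simpa only [abs_sub_comm] using this hy hx hyx
  have hIcc : Icc x y ⊆ s := hs.ordConnected.out hx hy
  obtain ⟨ξ, hξ, hslope⟩ := exists_hasDerivAt_eq_slope f f' hxy
    (fun t ht => (hf t (hIcc ht)).continuousAt.continuousWithinAt)
    (fun t ht => hf t (hIcc (Ioo_subset_Icc_self ht)))
  have hdiff : f y - f x = f' ξ * (y - x) := by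
    rw [hslope, div_mul_cancel₀ _ (sub_ne_zero.2 hxy.ne')]
  rw [hdiff, abs_mul]
  exact mul_le_mul_of_nonneg_right (hm ξ (hIcc (Ioo_subset_Icc_self hξ))) (abs_nonneg _)

theorem volume_sublevel_le_of_le_abs_deriv {f f' : ℝ → ℝ} {s : Set ℝ} (hs : Convex ℝ s)
    (hf : ∀ x ∈ s, HasDerivAt f (f' x) x) {m : ℝ} (hm₀ : 0 < m) (hm : ∀ x ∈ s, m ≤ |f' x|)
    (ε : ℝ) : volume {x ∈ s | |f x| ≤ ε} ≤ ENNReal.ofReal (2 * ε / m) := by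
  refine (Real.volume_le_diam _).trans (Metric.ediam_le fun x hx y hy => ?_)
  rw [edist_dist, Real.dist_eq]
  refine ENNReal.ofReal_le_ofReal ((le_div_iff₀' hm₀).2 ?_)
  calc m * |x - y| ≤ |f x - f y| := mul_abs_sub_le_abs_sub_of_le_abs_deriv hs hf hm hy.1 hx.1
    _ ≤ |f x| + |f y| := abs_sub _ _
    _ ≤ 2 * ε := by linarith [hx.2, hy.2]

theorem exists_volume_sublevel_near_le {f f' : ℝ → ℝ} (hf : ∀ x, HasDerivAt f (f' x) x) {x₀ δ : ℝ}
    (hf' : ContinuousAt f' x₀) (hδ : 0 < δ) (hδx₀ : δ ≤ |f' x₀|) :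
    ∃ c : ℝ, 0 < c ∧ ∀ ε : ℝ,
      volume {x : ℝ | |x - x₀| < c ∧ |f x| ≤ ε} ≤ ENNReal.ofReal ((4 / δ) * ε) := by
  obtain ⟨c, hc, hball⟩ := Metric.eventually_nhds_iff_ball.1
    (hf'.abs.eventually_const_lt (half_lt_self hδ |>.trans_le hδx₀))
  refine ⟨c, hc, fun ε => ?_⟩
  have hbound := volume_sublevel_le_of_le_abs_deriv (convex_ball x₀ c) (fun x _ => hf x)
    (half_pos hδ) (fun x hx => (hball x hx).le) ε
  have hratio : 2 * ε / (δ / 2) = 4 / δ * ε := by field_simp; ring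
  simpa only [Metric.mem_ball, Real.dist_eq, hratio] using hbound

theorem Polynomial.eval_derivative_ne_zero_of_forall_aeval_complex {P : Polynomial ℝ}
    (hsimple : ∀ z : ℂ, Polynomial.aeval z P = 0 → Polynomial.aeval z P.derivative ≠ 0) {x : ℝ}
    (hx : P.IsRoot x) : P.derivative.eval x ≠ 0 := by
  simpa [← Complex.coe_algebraMap, Polynomial.aeval_algebraMap_apply_eq_algebraMap_eval,
    hx.eq_zero] using hsimple x

/-- Quantitative transversality (4.59)-(4.60): if a real polynomial `P` has no
repeated complex roots (equivalently `Res(P, P') ≠ 0`), then there is `δ > 0`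
with `|P'(x)| ≥ δ` at every real root `x` of `P`, and near each real root `x₀`
the sublevel set `{|P| ≤ ε}` has Lebesgue measure at most `(4/δ)·ε` for all
sufficiently small `ε > 0`. -/
theorem stmt_19 (P : Polynomial ℝ) (hP : P ≠ 0)
    (hsimple : ∀ z : ℂ, Polynomial.aeval z P = 0 → Polynomial.aeval z P.derivative ≠ 0) :
    ∃ δ : ℝ, 0 < δ ∧
      (∀ x : ℝ, P.eval x = 0 → δ ≤ |P.derivative.eval x|) ∧
      ∀ x₀ : ℝ, P.eval x₀ = 0 →
        ∃ c : ℝ, 0 < c ∧ ∃ ε₀ : ℝ, 0 < ε₀ ∧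
          ∀ ε : ℝ, 0 < ε → ε < ε₀ →
            volume {x : ℝ | |x - x₀| < c ∧ |P.eval x| ≤ ε} ≤
              ENNReal.ofReal ((4 / δ) * ε) := by
  have hroots : ∀ x ∈ {x | P.IsRoot x}, 0 < |P.derivative.eval x| := fun x hx =>
    abs_pos.2 (Polynomial.eval_derivative_ne_zero_of_forall_aeval_complex hsimple hx)
  obtain ⟨δ, hδ, hδroots⟩ := (Polynomial.finite_setOfPred_isRoot hP).exists_pos_forall_le hroots
  refine ⟨δ, hδ, hδroots, fun x₀ hx₀ => ?_⟩
  obtain ⟨c, hc, hvolume⟩ := exists_volume_sublevel_near_le P.hasDerivAt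
    P.derivative.continuous.continuousAt hδ (hδroots x₀ hx₀)
  exact ⟨c, hc, 1, one_pos, fun ε _ _ => hvolume ε⟩
end
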